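/- (Wei duality.) Let C ⊆ F_q^n be a linear code of dimension k, and let C^⊥ = {w ∈ F_q^n : w·c = 0 for all c ∈ C} be its Euclidean dual, which has dimension n−k. Then {d_r(C) : 1 ≤ r ≤ k} = {1, 2, …, n} ∖ {n + 1 − d_r(C^⊥) : 1 ≤ r ≤ n−k}. -/

import Mathlib

open Classical in
/-- Support of a linear code. -/
noncomputable def codeSupp {F ι : Type*} [Field F] [Fintype ι]
    (C : Submodule F (ι → F)) : Finset ι :=
  Finset.univ.filter (fun i => ∃ c ∈ C, c i ≠ 0)

/-- The `r`-th generalized Hamming weight of a linear code: the minimum cardinality of the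
support of an `r`-dimensional subcode. -/
noncomputable def GHW {F ι : Type*} [Field F] [Fintype ι]
    (C : Submodule F (ι → F)) (r : ℕ) : ℕ :=
  sInf {k | ∃ C' : Submodule F (ι → F),
    C' ≤ C ∧ Module.finrank F C' = r ∧ (codeSupp C').card = k}

/-- The Euclidean dual of a linear code. -/
def dualCode {F : Type*} [Field F] {n : ℕ} (C : Submodule F (Fin n → F)) :
    Submodule F (Fin n → F) where
  carrier := {w | ∀ c ∈ C, ∑ i, w i * c i = 0}
  add_mem' := by
    intro a b ha hb c hc
    simp only [Pi.add_apply, add_mul]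
    rw [Finset.sum_add_distrib, ha c hc, hb c hc, add_zero]
  zero_mem' := by intro c hc; simp
  smul_mem' := by
    intro t a ha c hc
    simp only [Pi.smul_apply, smul_eq_mul, mul_assoc, ← Finset.mul_sum, ha c hc, mul_zero]

/-! If `f_C m` is the largest dimension of a subcode of `C` supported on `m` coordinates, then
`d_r(C) ≤ m ↔ r ≤ f_C m`, so the weight hierarchy of `C` is the set of points where `f_C`
jumps. The dual of `C + F^I` is `C^⊥ ∩ F^(Iᶜ)`, and counting dimensions gives
`f_C m + (n - m) = dim C + f_{C^⊥} (n - m)`. Hence the increments of `f_C` at `m` and of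
`f_{C^⊥}` at `n + 1 - m` add up to one; both functions are nondecreasing, so exactly one of
them jumps. -/

open Module

def supportedOn (F : Type*) {ι : Type*} [Field F] (I : Finset ι) : Submodule F (ι → F) :=
  ⨅ i ∈ (↑I : Set ι)ᶜ, LinearMap.ker (LinearMap.proj i)

section Supported

variable {F ι : Type*} [Field F]

theorem mem_supportedOn {I : Finset ι} {v : ι → F} :
    v ∈ supportedOn F I ↔ ∀ i ∉ I, v i = 0 := by
  simp [supportedOn]

theorem supportedOn_mono {I J : Finset ι} (h : I ⊆ J) : supportedOn F I ≤ supportedOn F J :=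
  fun _ hv => mem_supportedOn.2 fun i hi => mem_supportedOn.1 hv i fun hiI => hi (h hiI)

theorem supportedOn_empty : supportedOn F (∅ : Finset ι) = ⊥ :=
  eq_bot_iff.2 fun _ hv => funext fun i => mem_supportedOn.1 hv i (Finset.notMem_empty i)

theorem supportedOn_univ [Fintype ι] : supportedOn F (Finset.univ : Finset ι) = ⊤ :=
  eq_top_iff.2 fun _ _ => mem_supportedOn.2 fun i hi => absurd (Finset.mem_univ i) hi

theorem finrank_supportedOn [Fintype ι] [DecidableEq ι] (I : Finset ι) :
    finrank F (supportedOn F I) = I.card := by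
  rw [supportedOn, (LinearMap.iInfKerProjEquiv F (fun _ => F) disjoint_compl_right
    (by simp)).finrank_eq]
  simp

theorem codeSupp_subset_iff [Fintype ι] {C : Submodule F (ι → F)} {I : Finset ι} :
    codeSupp C ⊆ I ↔ C ≤ supportedOn F I := by
  simp only [codeSupp, Finset.mem_filter, Finset.mem_univ, true_and,
    SetLike.le_def, mem_supportedOn]
  exact ⟨fun h c hc i hi => by_contra fun hci => hi (h ⟨c, hc, hci⟩),
    fun h i ⟨c, hc, hci⟩ => by_contra fun hi => hci (h hc i hi)⟩

end Supported

section MaxSupported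

variable {F ι : Type*} [Field F] [Fintype ι]

noncomputable def maxSupportedFinrank (C : Submodule F (ι → F)) (m : ℕ) : ℕ :=
  (Finset.univ.powersetCard m).sup fun I => finrank F ↥(C ⊓ supportedOn F I)

variable (C : Submodule F (ι → F))

theorem finrank_inf_supportedOn_le_maxSupportedFinrank {I : Finset ι} {m : ℕ}
    (hI : I.card = m) : finrank F ↥(C ⊓ supportedOn F I) ≤ maxSupportedFinrank C m :=
  Finset.le_sup (f := fun I => finrank F ↥(C ⊓ supportedOn F I))
    (Finset.mem_powersetCard_univ.2 hI)

theorem exists_finrank_inf_supportedOn_eq_maxSupportedFinrank {m : ℕ}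
    (hm : m ≤ Fintype.card ι) :
    ∃ I : Finset ι, I.card = m ∧
      finrank F ↥(C ⊓ supportedOn F I) = maxSupportedFinrank C m := by
  obtain ⟨I, hI, hmax⟩ := Finset.exists_mem_eq_sup (Finset.univ.powersetCard m)
    (Finset.powersetCard_nonempty.2 (by rwa [Finset.card_univ]))
    fun I => finrank F ↥(C ⊓ supportedOn F I)
  exact ⟨I, Finset.mem_powersetCard_univ.1 hI, hmax.symm⟩

theorem maxSupportedFinrank_le_finrank (m : ℕ) : maxSupportedFinrank C m ≤ finrank F C :=
  Finset.sup_le fun _ _ => Submodule.finrank_mono inf_le_left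

theorem maxSupportedFinrank_zero : maxSupportedFinrank C 0 = 0 := by
  simp [maxSupportedFinrank, supportedOn_empty]

theorem maxSupportedFinrank_card : maxSupportedFinrank C (Fintype.card ι) = finrank F C := by
  refine le_antisymm (maxSupportedFinrank_le_finrank C _) ?_
  have := finrank_inf_supportedOn_le_maxSupportedFinrank C (Finset.card_univ (α := ι))
  rwa [supportedOn_univ, inf_top_eq] at this

theorem maxSupportedFinrank_mono {m m' : ℕ} (h : m ≤ m') (h' : m' ≤ Fintype.card ι) :
    maxSupportedFinrank C m ≤ maxSupportedFinrank C m' := by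
  obtain ⟨I, rfl, hI⟩ := exists_finrank_inf_supportedOn_eq_maxSupportedFinrank C
    (h.trans h')
  obtain ⟨J, hIJ, -, hJ⟩ := Finset.exists_subsuperset_card_eq I.subset_univ h
    (by rwa [Finset.card_univ])
  rw [← hI]
  exact (Submodule.finrank_mono (inf_le_inf_left C (supportedOn_mono hIJ))).trans
    (finrank_inf_supportedOn_le_maxSupportedFinrank C hJ)

end MaxSupported

theorem Submodule.exists_le_finrank_eq {F M : Type*} [Field F] [AddCommGroup M] [Module F M]
    [FiniteDimensional F M] (V : Submodule F M) {r : ℕ} (h : r ≤ finrank F V) :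
    ∃ W ≤ V, finrank F W = r := by
  let b := Module.finBasis F V
  let v : Fin r → M := fun i => b (Fin.castLE h i)
  have hv : LinearIndependent F v :=
    ((b.linearIndependent.comp _ (Fin.castLE_injective h)).map' V.subtype V.ker_subtype)
  refine ⟨Submodule.span F (Set.range v), ?_, by rw [finrank_span_eq_card hv, Fintype.card_fin]⟩
  exact Submodule.span_le.2 (Set.range_subset_iff.2 fun i => (b (Fin.castLE h i)).2)

section WeightHierarchy

variable {F ι : Type*} [Field F] [Fintype ι] (C : Submodule F (ι → F))

theorem GHW_le_iff {r m : ℕ} (hr : r ≤ finrank F C) (hm : m ≤ Fintype.card ι) :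
    GHW C r ≤ m ↔ r ≤ maxSupportedFinrank C m := by
  constructor
  · intro h
    obtain ⟨D, hDC, hDr, hD⟩ := Nat.sInf_mem (s := {k | ∃ D : Submodule F (ι → F),
        D ≤ C ∧ finrank F D = r ∧ (codeSupp D).card = k}) <| by
      obtain ⟨D, hDC, hDr⟩ := C.exists_le_finrank_eq hr
      exact ⟨_, D, hDC, hDr, rfl⟩
    obtain ⟨I, hDI, -, hI⟩ := Finset.exists_subsuperset_card_eq (codeSupp D).subset_univ
      (hD.trans_le h) (by rwa [Finset.card_univ])
    calc r = finrank F D := hDr.symm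
      _ ≤ finrank F ↥(C ⊓ supportedOn F I) :=
        Submodule.finrank_mono (le_inf hDC (codeSupp_subset_iff.1 hDI))
      _ ≤ maxSupportedFinrank C m := finrank_inf_supportedOn_le_maxSupportedFinrank C hI
  · intro h
    obtain ⟨I, hI, hIC⟩ := exists_finrank_inf_supportedOn_eq_maxSupportedFinrank C hm
    obtain ⟨D, hD, hDr⟩ := (C ⊓ supportedOn F I).exists_le_finrank_eq (hIC ▸ h)
    calc GHW C r ≤ (codeSupp D).card := Nat.sInf_le ⟨D, hD.trans inf_le_left, hDr, rfl⟩
      _ ≤ I.card := Finset.card_le_card (codeSupp_subset_iff.2 (hD.trans inf_le_right))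
      _ = m := hI

theorem GHW_mem_Icc {r : ℕ} (hr₁ : 1 ≤ r) (hr : r ≤ finrank F C) :
    GHW C r ∈ Set.Icc 1 (Fintype.card ι) := by
  refine ⟨Nat.one_le_iff_ne_zero.2 fun h0 => ?_, ?_⟩
  · have := (GHW_le_iff C hr (Nat.zero_le _)).1 h0.le
    rw [maxSupportedFinrank_zero] at this
    omega
  · rwa [GHW_le_iff C hr le_rfl, maxSupportedFinrank_card]

def weightHierarchy : Set ℕ :=
  {x | ∃ r : ℕ, 1 ≤ r ∧ r ≤ finrank F C ∧ GHW C r = x}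

theorem mem_weightHierarchy_iff {m : ℕ} :
    m ∈ weightHierarchy C ↔
      m ∈ Set.Icc 1 (Fintype.card ι) ∧
        maxSupportedFinrank C (m - 1) < maxSupportedFinrank C m := by
  constructor
  · rintro ⟨r, hr₁, hr, rfl⟩
    obtain ⟨hm₁, hm⟩ := GHW_mem_Icc C hr₁ hr
    have hle := (GHW_le_iff C hr hm).1 le_rfl
    have hnot := (GHW_le_iff C hr (by omega : GHW C r - 1 ≤ _)).not.1 (by omega)
    exact ⟨⟨hm₁, hm⟩, by omega⟩
  · rintro ⟨⟨hm₁, hm⟩, hjump⟩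
    have hr : maxSupportedFinrank C (m - 1) + 1 ≤ finrank F C :=
      hjump.trans_le (maxSupportedFinrank_le_finrank C m)
    refine ⟨_, Nat.le_add_left 1 _, hr, le_antisymm ((GHW_le_iff C hr hm).2 hjump) ?_⟩
    by_contra! hlt
    have := (GHW_le_iff C hr (by omega : m - 1 ≤ _)).1 (by omega)
    omega

end WeightHierarchy

section Dual

variable {F : Type*} [Field F] {n : ℕ}

theorem mem_dualCode {C : Submodule F (Fin n → F)} {w : Fin n → F} :
    w ∈ dualCode C ↔ ∀ c ∈ C, ∑ i, w i * c i = 0 :=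
  Iff.rfl

theorem dualCode_eq_comap (C : Submodule F (Fin n → F)) :
    dualCode C = C.dualAnnihilator.comap (dotProductEquiv F (Fin n)).toLinearMap := by
  ext w
  simp [mem_dualCode, Submodule.mem_dualAnnihilator, dotProduct]

theorem finrank_dualCode_add (C : Submodule F (Fin n → F)) :
    finrank F (dualCode C) + finrank F C = n := by
  rw [dualCode_eq_comap, Submodule.comap_equiv_eq_map_symm, LinearEquiv.finrank_map_eq, add_comm,
    Subspace.finrank_add_finrank_dualAnnihilator_eq, finrank_fin_fun]

theorem dualCode_sup (A B : Submodule F (Fin n → F)) :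
    dualCode (A ⊔ B) = dualCode A ⊓ dualCode B := by
  simp only [dualCode_eq_comap, Submodule.dualAnnihilator_sup_eq, Submodule.comap_inf]

theorem dualCode_supportedOn (I : Finset (Fin n)) :
    dualCode (supportedOn F I) = supportedOn F Iᶜ := by
  ext w
  rw [mem_dualCode, mem_supportedOn]
  constructor
  · intro h i hi
    rw [Finset.notMem_compl] at hi
    simpa [Pi.single_apply] using h (Pi.single i 1) (mem_supportedOn.2 fun j hj =>
      Pi.single_eq_of_ne (by rintro rfl; exact hj hi) 1)
  · intro h c hc
    refine Finset.sum_eq_zero fun i _ => ?_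
    by_cases hi : i ∈ I
    · rw [h i (Finset.notMem_compl.2 hi), zero_mul]
    · rw [mem_supportedOn.1 hc i hi, mul_zero]

theorem finrank_inf_supportedOn_add_card_compl (C : Submodule F (Fin n → F))
    (I : Finset (Fin n)) :
    finrank F ↥(C ⊓ supportedOn F I) + Iᶜ.card =
      finrank F C + finrank F ↥(dualCode C ⊓ supportedOn F Iᶜ) := by
  have hdual := finrank_dualCode_add (C ⊔ supportedOn F I)
  rw [dualCode_sup, dualCode_supportedOn] at hdual
  have hsup := Submodule.finrank_sup_add_finrank_inf_eq C (supportedOn F I)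
  rw [finrank_supportedOn] at hsup
  have hcard := Finset.card_add_card_compl I
  rw [Fintype.card_fin] at hcard
  omega

theorem maxSupportedFinrank_add_eq (C : Submodule F (Fin n → F)) {m : ℕ} (hm : m ≤ n) :
    maxSupportedFinrank C m + (n - m) =
      finrank F C + maxSupportedFinrank (dualCode C) (n - m) := by
  have hcompl (I : Finset (Fin n)) : Iᶜ.card = n - I.card := by
    rw [Finset.card_compl, Fintype.card_fin]
  apply le_antisymm
  · obtain ⟨I, rfl, hI⟩ :=
      exists_finrank_inf_supportedOn_eq_maxSupportedFinrank C (m := m) (by rwa [Fintype.card_fin])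
    rw [← hI, ← hcompl, finrank_inf_supportedOn_add_card_compl]
    exact Nat.add_le_add_left (finrank_inf_supportedOn_le_maxSupportedFinrank (dualCode C) rfl) _
  · obtain ⟨J, hJ, hJmax⟩ := exists_finrank_inf_supportedOn_eq_maxSupportedFinrank
      (dualCode C) (m := n - m) (by rw [Fintype.card_fin]; omega)
    have hdual := finrank_inf_supportedOn_add_card_compl C Jᶜ
    rw [compl_compl, hJmax, hJ] at hdual
    have hle := finrank_inf_supportedOn_le_maxSupportedFinrank C
      (show Jᶜ.card = m by rw [hcompl, hJ]; omega)
    omega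

theorem maxSupportedFinrank_lt_iff_dualCode (C : Submodule F (Fin n → F)) {m : ℕ}
    (hm₁ : 1 ≤ m) (hm : m ≤ n) :
    maxSupportedFinrank C (m - 1) < maxSupportedFinrank C m ↔
      ¬ maxSupportedFinrank (dualCode C) (n - m) <
        maxSupportedFinrank (dualCode C) (n + 1 - m) := by
  have h₁ := maxSupportedFinrank_add_eq C hm
  have h₂ := maxSupportedFinrank_add_eq C (m := m - 1) (by omega)
  rw [show n - (m - 1) = n + 1 - m by omega] at h₂
  have hmono := maxSupportedFinrank_mono C (Nat.sub_le m 1) (by rwa [Fintype.card_fin])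
  have hmono' := maxSupportedFinrank_mono (dualCode C) (by omega : n - m ≤ n + 1 - m)
    (by rw [Fintype.card_fin]; omega)
  omega

end Dual

theorem wei_duality_general {F : Type*} [Field F] {n : ℕ}
    (C : Submodule F (Fin n → F)) :
    Module.finrank F (dualCode C) = n - Module.finrank F C ∧
    {x : ℕ | ∃ r : ℕ, 1 ≤ r ∧ r ≤ Module.finrank F C ∧ GHW C r = x} =
      Set.Icc 1 n \
        {x : ℕ | ∃ r : ℕ, 1 ≤ r ∧ r ≤ n - Module.finrank F C ∧
          x = n + 1 - GHW (dualCode C) r} := by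
  have hdim : finrank F (dualCode C) = n - finrank F C := by
    have := finrank_dualCode_add C
    omega
  refine ⟨hdim, Set.ext fun x => ?_⟩
  change x ∈ weightHierarchy C ↔ _
  rw [mem_weightHierarchy_iff, Fintype.card_fin, Set.mem_sdiff]
  refine and_congr_right fun ⟨hx₁, hx⟩ => ?_
  have hreflect :
      (∃ r, 1 ≤ r ∧ r ≤ finrank F (dualCode C) ∧ x = n + 1 - GHW (dualCode C) r) ↔
        n + 1 - x ∈ weightHierarchy (dualCode C) := by
    refine exists_congr fun r => and_congr_right fun hr₁ => and_congr_right fun hr => ?_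
    have := GHW_mem_Icc (dualCode C) hr₁ hr
    rw [Fintype.card_fin, Set.mem_Icc] at this
    omega
  rw [maxSupportedFinrank_lt_iff_dualCode C hx₁ hx, ← hdim, Set.mem_ofPred_eq, hreflect,
    mem_weightHierarchy_iff, Fintype.card_fin, show n + 1 - x - 1 = n - x by omega,
    and_iff_right ⟨by omega, by omega⟩]

/-- **Wei duality.** For a linear code `C ⊆ F_q^n` of dimension `k`, the
dual `C^⊥` has dimension `n − k` and
`{d_r(C) : 1 ≤ r ≤ k} = {1,…,n} ∖ {n + 1 − d_r(C^⊥) : 1 ≤ r ≤ n−k}`. -/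
theorem wei_duality {F : Type*} [Field F] [Fintype F] {n : ℕ}
    (C : Submodule F (Fin n → F)) :
    Module.finrank F (dualCode C) = n - Module.finrank F C ∧
    {x : ℕ | ∃ r : ℕ, 1 ≤ r ∧ r ≤ Module.finrank F C ∧ GHW C r = x} =
      Set.Icc 1 n \
        {x : ℕ | ∃ r : ℕ, 1 ≤ r ∧ r ≤ n - Module.finrank F C ∧
          x = n + 1 - GHW (dualCode C) r} :=
  wei_duality_general C
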